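/- Let q = 1/2 and let p ∈ Δ_2 with p_1 > p_2. Then G^n(p) converges to (p_1 − p_2, 0, 1 − p_1 + p_2) as n → ∞. -/

import Mathlib

/-!
For `q = 1/2` the difference `x₁ - x₂` is invariant on the simplex, since
`G₁ - G₂ = (x₁ - x₂)(x₁ + x₂ + x₃)`, while `G₂ = x₂ (1 - x₁) ≤ (1 - d) x₂`
with `d = p₁ - p₂ > 0`. Hence `x₂` decays geometrically along the orbit,
`x₁ = x₂ + d` tends to `d`, and `x₃ = 1 - x₁ - x₂` tends to `1 - d`.
-/

open Filter Topology Set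

/-- The map G = (G₁,G₂,G₃) on ℝ³ (with parameter q):
G₁(x) = x₁² + 2q x₁ x₃, G₂(x) = x₂² + 2q x₂ x₃,
G₃(x) = x₃² + 2 x₁ x₂ + 2(1−q) x₁ x₃ + 2(1−q) x₂ x₃. -/
noncomputable def Gmap (q : ℝ) (x : ℝ × ℝ × ℝ) : ℝ × ℝ × ℝ :=
  (x.1 ^ 2 + 2 * q * x.1 * x.2.2,
   x.2.1 ^ 2 + 2 * q * x.2.1 * x.2.2,
   x.2.2 ^ 2 + 2 * x.1 * x.2.1 + 2 * (1 - q) * x.1 * x.2.2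
     + 2 * (1 - q) * x.2.1 * x.2.2)

/-- The open simplex Δ₂ ⊆ ℝ³. -/
def simplex2 : Set (ℝ × ℝ × ℝ) :=
  {p | p.1 + p.2.1 + p.2.2 = 1 ∧ 0 < p.1 ∧ 0 < p.2.1 ∧ 0 < p.2.2}

lemma Gmap_sum (q : ℝ) (x : ℝ × ℝ × ℝ) :
    (Gmap q x).1 + (Gmap q x).2.1 + (Gmap q x).2.2 = (x.1 + x.2.1 + x.2.2) ^ 2 := by
  simp only [Gmap]; ring

lemma Gmap_mapsTo_simplex2 {q : ℝ} (hq₀ : 0 ≤ q) (hq₁ : q ≤ 1) :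
    MapsTo (Gmap q) simplex2 simplex2 := by
  rintro x ⟨hsum, h₁, h₂, h₃⟩
  refine ⟨by rw [Gmap_sum, hsum, one_pow], ?_, ?_, ?_⟩ <;> simp only [Gmap] <;> positivity

lemma iterate_Gmap_half_mem_simplex2 {p : ℝ × ℝ × ℝ} (hp : p ∈ simplex2) (n : ℕ) :
    (Gmap (1 / 2))^[n] p ∈ simplex2 :=
  (Gmap_mapsTo_simplex2 (q := 1 / 2) (by norm_num) (by norm_num)).iterate n hp

lemma Gmap_half_fst_sub_snd {x : ℝ × ℝ × ℝ} (hx : x ∈ simplex2) :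
    (Gmap (1 / 2) x).1 - (Gmap (1 / 2) x).2.1 = x.1 - x.2.1 := by
  have hsum : x.1 + x.2.1 + x.2.2 = 1 := hx.1
  calc (Gmap (1 / 2) x).1 - (Gmap (1 / 2) x).2.1 = (x.1 - x.2.1) * (x.1 + x.2.1 + x.2.2) := by
        simp only [Gmap]; ring
    _ = x.1 - x.2.1 := by rw [hsum, mul_one]

lemma Gmap_half_snd_le {x : ℝ × ℝ × ℝ} (hx : x ∈ simplex2) :
    (Gmap (1 / 2) x).2.1 ≤ (1 - (x.1 - x.2.1)) * x.2.1 := by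
  obtain ⟨hsum, -, h₂, -⟩ := hx
  calc (Gmap (1 / 2) x).2.1 = (1 - (x.1 - x.2.1)) * x.2.1 - x.2.1 ^ 2 := by
        simp only [Gmap]; linear_combination x.2.1 * hsum
    _ ≤ (1 - (x.1 - x.2.1)) * x.2.1 := by nlinarith

lemma iterate_Gmap_half_fst_sub_snd {p : ℝ × ℝ × ℝ} (hp : p ∈ simplex2) (n : ℕ) :
    ((Gmap (1 / 2))^[n] p).1 - ((Gmap (1 / 2))^[n] p).2.1 = p.1 - p.2.1 := by
  induction n with
  | zero => rfl
  | succ n ih =>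
    rw [Function.iterate_succ_apply',
      Gmap_half_fst_sub_snd (iterate_Gmap_half_mem_simplex2 hp n), ih]

lemma iterate_Gmap_half_snd_le {p : ℝ × ℝ × ℝ} (hp : p ∈ simplex2) (n : ℕ) :
    ((Gmap (1 / 2))^[n] p).2.1 ≤ (1 - (p.1 - p.2.1)) ^ n * p.2.1 := by
  induction n with
  | zero => simp
  | succ n ih =>
    have hrate : 0 ≤ 1 - (p.1 - p.2.1) := by obtain ⟨hsum, -, h₂, h₃⟩ := hp; linarith
    calc ((Gmap (1 / 2))^[n + 1] p).2.1 ≤ (1 - (p.1 - p.2.1)) * ((Gmap (1 / 2))^[n] p).2.1 := by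
          rw [Function.iterate_succ_apply', ← iterate_Gmap_half_fst_sub_snd hp n]
          exact Gmap_half_snd_le (iterate_Gmap_half_mem_simplex2 hp n)
      _ ≤ (1 - (p.1 - p.2.1)) * ((1 - (p.1 - p.2.1)) ^ n * p.2.1) := by gcongr
      _ = (1 - (p.1 - p.2.1)) ^ (n + 1) * p.2.1 := by ring

lemma tendsto_iterate_Gmap_half_snd {p : ℝ × ℝ × ℝ} (hp : p ∈ simplex2)
    (h12 : p.2.1 < p.1) :
    Tendsto (fun n => ((Gmap (1 / 2))^[n] p).2.1) atTop (𝓝 0) := by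
  have hgeom : Tendsto (fun n : ℕ => (1 - (p.1 - p.2.1)) ^ n * p.2.1) atTop (𝓝 0) := by
    obtain ⟨hsum, -, h₂, h₃⟩ := hp
    simpa using (tendsto_pow_atTop_nhds_zero_of_lt_one (by linarith) (by linarith)).mul_const p.2.1
  have hnonneg n : 0 ≤ ((Gmap (1 / 2))^[n] p).2.1 :=
    (iterate_Gmap_half_mem_simplex2 hp n).2.2.1.le
  exact squeeze_zero hnonneg (iterate_Gmap_half_snd_le hp) hgeom

/-- If q = 1/2 and p₁ > p₂, then G^n(p) → (p₁ − p₂, 0, 1 − p₁ + p₂). -/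
theorem tendsto_critical_first (p : ℝ × ℝ × ℝ) (hp : p ∈ simplex2)
    (h12 : p.2.1 < p.1) :
    Tendsto (fun n => (Gmap (1 / 2))^[n] p) atTop
      (𝓝 (p.1 - p.2.1, (0 : ℝ), 1 - p.1 + p.2.1)) := by
  set d := p.1 - p.2.1
  let point : ℝ → ℝ × ℝ × ℝ := fun t => (t + d, t, 1 - d - 2 * t)
  have horbit n : (Gmap (1 / 2))^[n] p = point ((Gmap (1 / 2))^[n] p).2.1 := by
    have hsum := (iterate_Gmap_half_mem_simplex2 hp n).1
    have hdiff := iterate_Gmap_half_fst_sub_snd hp n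
    refine Prod.ext ?_ (Prod.ext rfl ?_) <;> simp only [point] <;> linarith
  have hlim : point 0 = (p.1 - p.2.1, 0, 1 - p.1 + p.2.1) := by
    simp only [point, d]; ext <;> ring
  rw [funext horbit, ← hlim]
  exact ((by fun_prop : Continuous point).tendsto 0).comp (tendsto_iterate_Gmap_half_snd hp h12)
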